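/- Let G be an extremal uniformly 3-connected graph on n = 3k + ℓ ≥ 5 vertices, for some integer k ≥ 2 and ℓ ∈ {−1, 0, 1}, constructed from complete graphs on four vertices using j bridge operations, t edge joins, p primary spoke operations and s secondary spoke operations. Then: (1) p = k − 1; (2) if ℓ = −1 then j = k−2 and t = s = 0; (3) if ℓ = 0 then j = k−2, t = 0 and s = 1; (4) if ℓ = 1 then either j = k−1 and t = s = 0, or j = k−2, t = 1 and s = 0, or j = k−2, t = 0 and s = 2. -/

import Mathlib

open SimpleGraph

/-- The degree of a vertex, as the cardinality of its neighbor set. -/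
noncomputable def vdeg {V : Type*} (G : SimpleGraph V) (v : V) : ℕ :=
  (G.neighborSet v).ncard

/-- The minimum degree of a graph. -/
noncomputable def minDeg {V : Type*} (G : SimpleGraph V) : ℕ :=
  sInf (Set.range (vdeg G))

/-- `ν(G)`: the number of vertices of minimum degree. -/
noncomputable def nu {V : Type*} (G : SimpleGraph V) : ℕ :=
  {v | vdeg G v = minDeg G}.ncard

/-- A family of `m` pairwise independent (i.e. internally vertex-disjoint, pairwise distinct)
paths from `u` to `v`. -/
def IsIndepPathFamily {V : Type*} (G : SimpleGraph V) {u v : V} {m : ℕ}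
    (W : Fin m → G.Walk u v) : Prop :=
  (∀ i, (W i).IsPath) ∧ Function.Injective W ∧
    ∀ i j, i ≠ j → ∀ x, x ∈ (W i).support → x ∈ (W j).support → x = u ∨ x = v

/-- A graph on at least `k+1` vertices is uniformly `k`-connected if each pair of its vertices
is connected by `k` and not more than `k` independent paths. -/
def UniformlyConnected (k : ℕ) {V : Type*} [Fintype V] (G : SimpleGraph V) : Prop :=
  k + 1 ≤ Fintype.card V ∧
    ∀ u v : V, u ≠ v →
      (∃ W : Fin k → G.Walk u v, IsIndepPathFamily G W) ∧
      ∀ m : ℕ, (∃ W : Fin m → G.Walk u v, IsIndepPathFamily G W) → m ≤ k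

/-- `k`-connected: more than `k` vertices, and still connected after deleting any fewer
than `k` vertices. -/
def KConnected (k : ℕ) {V : Type*} [Fintype V] (G : SimpleGraph V) : Prop :=
  k < Fintype.card V ∧
    ∀ S : Finset V, S.card < k → (G.induce {v : V | v ∉ S}).Connected
/-- A uniformly 3-connected graph `G` on `n` vertices is extremal if `ν(G) = ⌈(2n+2)/3⌉`. -/
def ExtremalU3 {V : Type*} [Fintype V] (G : SimpleGraph V) : Prop :=
  UniformlyConnected 3 G ∧
    (nu G : ℤ) = ⌈(2 * (Fintype.card V : ℚ) + 2) / 3⌉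
/-- A finite simple graph, bundled with its vertex type. -/
structure FinGraph where
  V : Type
  [instFintype : Fintype V]
  graph : SimpleGraph V

attribute [instance] FinGraph.instFintype
/-- Hypothesis of the bridge operation: `v` has exactly the three distinct
neighbors `x`, `y`, `z` (so `v` has degree 3 and neighborhood `{x, y, z}`). -/
def BridgeHyp {V : Type*} (G : SimpleGraph V) (v x y z : V) : Prop :=
  x ≠ y ∧ x ≠ z ∧ y ≠ z ∧ G.neighborSet v = {x, y, z}

/-- The bridge operation: `(G1 − v1) ∪ (G2 − v2) + x1x2 + y1y2 + z1z2`. -/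
def BridgeGraph {V1 V2 : Type*} (G1 : SimpleGraph V1) (G2 : SimpleGraph V2)
    (v1 x1 y1 z1 : V1) (v2 x2 y2 z2 : V2) :
    SimpleGraph ({a : V1 // a ≠ v1} ⊕ {b : V2 // b ≠ v2}) :=
  SimpleGraph.fromRel (fun p q =>
    match p, q with
    | Sum.inl a, Sum.inl a' => G1.Adj a.1 a'.1
    | Sum.inr b, Sum.inr b' => G2.Adj b.1 b'.1
    | Sum.inl a, Sum.inr b =>
        (a.1 = x1 ∧ b.1 = x2) ∨ (a.1 = y1 ∧ b.1 = y2) ∨ (a.1 = z1 ∧ b.1 = z2)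
    | Sum.inr _, Sum.inl _ => False)
/-- Hypotheses of the spoke operation: `v`, `w`, `x` are distinct, `vw` is an edge,
and every vertex other than possibly `x` has degree 3. -/
def SpokeHyp {V : Type*} (G : SimpleGraph V) (v w x : V) : Prop :=
  v ≠ w ∧ v ≠ x ∧ w ≠ x ∧ G.Adj v w ∧ ∀ z : V, z ≠ x → vdeg G z = 3

/-- The spoke operation: `G + y − vw + vy + wy + xy`, where the new vertex `y`
is `Sum.inr ()`. -/
def SpokeGraph {V : Type*} (G : SimpleGraph V) (v w x : V) : SimpleGraph (V ⊕ Unit) :=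
  SimpleGraph.fromRel (fun p q =>
    match p, q with
    | Sum.inl a, Sum.inl b => G.Adj a b ∧ ¬(a = v ∧ b = w) ∧ ¬(a = w ∧ b = v)
    | Sum.inl a, Sum.inr _ => a = v ∨ a = w ∨ a = x
    | Sum.inr _, _ => False)
/-- The edge join of the edges `ab` and `cd`:
`G + x + y − ab − cd + ax + xb + cy + yd + xy`, where the new vertices `x` and `y`
are `Sum.inr false` and `Sum.inr true`. -/
def EdgeJoinGraph {V : Type*} (G : SimpleGraph V) (a b c d : V) : SimpleGraph (V ⊕ Bool) :=
  SimpleGraph.fromRel (fun p q =>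
    match p, q with
    | Sum.inl u, Sum.inl u' => G.Adj u u' ∧ ¬(u = a ∧ u' = b) ∧ ¬(u = b ∧ u' = a) ∧
        ¬(u = c ∧ u' = d) ∧ ¬(u = d ∧ u' = c)
    | Sum.inl u, Sum.inr false => u = a ∨ u = b
    | Sum.inl u, Sum.inr true => u = c ∨ u = d
    | Sum.inr i, Sum.inr i' => i ≠ i'
    | Sum.inr _, Sum.inl _ => False)
/-- `H` is (up to isomorphism) the result of applying the bridge operation to `G1`, `G2`. -/
def IsBridgeOf (H G1 G2 : FinGraph) : Prop :=
  ∃ (v1 x1 y1 z1 : G1.V) (v2 x2 y2 z2 : G2.V),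
    BridgeHyp G1.graph v1 x1 y1 z1 ∧ BridgeHyp G2.graph v2 x2 y2 z2 ∧
    Nonempty (H.graph ≃g BridgeGraph G1.graph G2.graph v1 x1 y1 z1 v2 x2 y2 z2)
/-- `H` is the result of a primary spoke operation on `G'` (here `deg x = 3`). -/
def IsPrimarySpokeOf (H G' : FinGraph) : Prop :=
  ∃ v w x : G'.V, SpokeHyp G'.graph v w x ∧ vdeg G'.graph x = 3 ∧
    Nonempty (H.graph ≃g SpokeGraph G'.graph v w x)

/-- `H` is the result of a secondary spoke operation on `G'` (here `deg x > 3`). -/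
def IsSecondarySpokeOf (H G' : FinGraph) : Prop :=
  ∃ v w x : G'.V, SpokeHyp G'.graph v w x ∧ 3 < vdeg G'.graph x ∧
    Nonempty (H.graph ≃g SpokeGraph G'.graph v w x)
/-- `H` is the result of an edge join of two distinct edges of the 3-regular
3-connected graph `G'`. -/
def IsEdgeJoinOf (H G' : FinGraph) : Prop :=
  (∀ z : G'.V, vdeg G'.graph z = 3) ∧ KConnected 3 G'.graph ∧
  ∃ a b c d : G'.V, G'.graph.Adj a b ∧ G'.graph.Adj c d ∧ s(a, b) ≠ s(c, d) ∧
    Nonempty (H.graph ≃g EdgeJoinGraph G'.graph a b c d)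
/-- `Constructed G j t p s`: the graph `G` is constructed from complete graphs on four
vertices by a sequence of `j` bridge operations, `t` edge joins, `p` primary spoke
operations and `s` secondary spoke operations. -/
inductive Constructed : FinGraph → ℕ → ℕ → ℕ → ℕ → Prop
  | base (G : FinGraph) : Nonempty (G.graph ≃g (⊤ : SimpleGraph (Fin 4))) →
      Constructed G 0 0 0 0
  | bridge (G G1 G2 : FinGraph) (j1 t1 p1 s1 j2 t2 p2 s2 : ℕ) :
      Constructed G1 j1 t1 p1 s1 → Constructed G2 j2 t2 p2 s2 → IsBridgeOf G G1 G2 →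
      Constructed G (j1 + j2 + 1) (t1 + t2) (p1 + p2) (s1 + s2)
  | edgeJoin (G G' : FinGraph) (j t p s : ℕ) :
      Constructed G' j t p s → IsEdgeJoinOf G G' → Constructed G j (t + 1) p s
  | primarySpoke (G G' : FinGraph) (j t p s : ℕ) :
      Constructed G' j t p s → IsPrimarySpokeOf G G' → Constructed G j t (p + 1) s
  | secondarySpoke (G G' : FinGraph) (j t p s : ℕ) :
      Constructed G' j t p s → IsSecondarySpokeOf G G' → Constructed G j t p (s + 1)

/-!
Every construction step preserves four facts: the graph has `2j + 2t + p + s + 4` vertices,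
minimum degree at least three, exactly `p` vertices of degree greater than three, and
`p ≤ j + 1`. Bridges and edge joins keep the degree of every surviving vertex; a primary spoke
acts on a cubic graph (so `p = 0` before it) and creates the only vertex of degree four, while a
secondary spoke raises the degree of that vertex again; `p ≤ j + 1` follows because only a bridge
can add up the counts of two graphs. Consequently `ν(G) = n - p`, and extremality
`ν(G) = ⌈(2n + 2)/3⌉ = 2k + ℓ + 1` gives `p = k - 1`; then `2j + 2t + s = 2k + ℓ - 3` with
`j ≥ k - 2` leaves only the listed solutions.
-/

section Degree

variable {V W : Type*}

lemma vdeg_iso {G : SimpleGraph V} {H : SimpleGraph W} (e : G ≃g H) (v : V) :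
    vdeg H (e v) = vdeg G v :=
  (Set.ncard_congr' (e.mapNeighborSet v)).symm

lemma ncard_setOf_vdeg_iso {G : SimpleGraph V} {H : SimpleGraph W} (e : G ≃g H)
    (P : ℕ → Prop) : {w | P (vdeg H w)}.ncard = {v | P (vdeg G v)}.ncard :=
  (Set.ncard_congr' (e.toEquiv.subtypeEquiv fun v =>
    iff_of_eq (congrArg P (vdeg_iso e v).symm))).symm

lemma ncard_setOf_sum {A B : Type*} [Finite A] [Finite B] (P : A ⊕ B → Prop) :
    {q | P q}.ncard = {a | P (Sum.inl a)}.ncard + {b | P (Sum.inr b)}.ncard := by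
  simp only [← Nat.card_coe_set_eq]
  exact (Nat.card_congr (Equiv.subtypeSum (p := P))).trans Nat.card_sum

lemma ncard_setOf_subtype {α : Type*} (Q P : α → Prop) :
    {a : Subtype Q | P a}.ncard = {a | Q a ∧ P a}.ncard := by
  rw [← Set.ncard_image_of_injective _ Subtype.val_injective]
  congr 1
  ext; simp [and_comm]

lemma vdeg_sum {A B : Type*} [Finite A] [Finite B] (H : SimpleGraph (A ⊕ B)) (q : A ⊕ B) :
    vdeg H q = {a | H.Adj q (Sum.inl a)}.ncard + {b | H.Adj q (Sum.inr b)}.ncard :=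
  ncard_setOf_sum _

/-- Deleting a family of distinct edges and re-attaching each of their ends once elsewhere
does not change degrees. -/
lemma ncard_neighborSet_sdiff_add [Finite V] {ι : Type*} {G : SimpleGraph V} {e : ι → Sym2 V}
    (he : Function.Injective e) (hG : ∀ i, e i ∈ G.edgeSet) (u : V) :
    (G.neighborSet u \ {z | ∃ i, s(u, z) = e i}).ncard + {i | u ∈ e i}.ncard = vdeg G u := by
  have hsub : {z | ∃ i, s(u, z) = e i} ⊆ G.neighborSet u := by
    rintro z ⟨i, hi⟩
    exact (G.mem_edgeSet).mp (hi ▸ hG i)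
  rw [vdeg, ← Set.ncard_sdiff_add_ncard_of_subset hsub]
  congr 1
  refine Set.ncard_congr (fun i hi => Sym2.Mem.other hi) (fun i hi => ⟨i, Sym2.other_spec hi⟩)
    (fun i i' hi hi' h => he ?_)
    (fun z ⟨i, hz⟩ => ⟨i, (hz ▸ Sym2.mem_mk_left u z : u ∈ e i), ?_⟩)
  · rw [← Sym2.other_spec hi, ← Sym2.other_spec hi', h]
  · exact Sym2.congr_right.mp ((Sym2.other_spec _).trans hz.symm)

lemma minDeg_eq_of_forall_le {G : SimpleGraph V} {m : ℕ} (hle : ∀ v, m ≤ vdeg G v)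
    (hex : ∃ v, vdeg G v = m) : minDeg G = m := by
  obtain ⟨v, hv⟩ := hex
  exact le_antisymm (hv ▸ Nat.sInf_le ⟨v, rfl⟩)
    (le_csInf ⟨_, v, rfl⟩ (by rintro _ ⟨w, rfl⟩; exact hle w))

lemma exists_vdeg_eq_of_ncard_lt [Fintype V] {G : SimpleGraph V} {m : ℕ}
    (hle : ∀ v, m ≤ vdeg G v) (hlt : {v | m < vdeg G v}.ncard < Fintype.card V) :
    ∃ v, vdeg G v = m := by
  by_contra! hne
  have : {v | m < vdeg G v} = Set.univ :=
    Set.eq_univ_of_forall fun v => (hle v).lt_of_ne (hne v).symm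
  rw [this, Set.ncard_univ, Nat.card_eq_fintype_card] at hlt
  exact hlt.false

lemma nu_add_ncard_lt_vdeg [Fintype V] {G : SimpleGraph V} {m : ℕ}
    (hle : ∀ v, m ≤ vdeg G v) (hex : ∃ v, vdeg G v = m) :
    nu G + {v | m < vdeg G v}.ncard = Fintype.card V := by
  have hmin : {v | vdeg G v = minDeg G} = {v | m < vdeg G v}ᶜ := by
    ext v
    simp only [minDeg_eq_of_forall_le hle hex, Set.mem_ofPred_eq, Set.mem_compl_iff, not_lt]
    exact ⟨le_of_eq, fun h => le_antisymm h (hle v)⟩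
  rw [nu, hmin, add_comm, Set.ncard_add_ncard_compl, Nat.card_eq_fintype_card]

lemma vdeg_top_fin_four (v : Fin 4) : vdeg (⊤ : SimpleGraph (Fin 4)) v = 3 := by
  rw [vdeg, SimpleGraph.neighborSet_top]
  exact Set.ncard_compl_of_ncard_eq_add {v} (by simp)

end Degree

section Spoke

variable {V : Type*} {G : SimpleGraph V} {v w x : V}

lemma spokeGraph_adj_inl_inl {a b : V} :
    (SpokeGraph G v w x).Adj (Sum.inl a) (Sum.inl b) ↔ G.Adj a b ∧ s(a, b) ≠ s(v, w) := by
  simp only [SpokeGraph, fromRel_adj, ne_eq, Sum.inl.injEq, Sym2.eq_iff]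
  constructor
  · rintro ⟨-, h | h⟩
    · exact ⟨h.1, by tauto⟩
    · exact ⟨h.1.symm, by tauto⟩
  · rintro ⟨hab, h⟩
    exact ⟨hab.ne, Or.inl ⟨hab, by tauto⟩⟩

lemma spokeGraph_adj_inl_inr {a : V} {u : Unit} :
    (SpokeGraph G v w x).Adj (Sum.inl a) (Sum.inr u) ↔ a ∈ s(v, w) ∨ a = x := by
  simp [SpokeGraph, or_assoc]

lemma spokeGraph_adj_inr_inl {a : V} {u : Unit} :
    (SpokeGraph G v w x).Adj (Sum.inr u) (Sum.inl a) ↔ a = v ∨ a = w ∨ a = x := by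
  rw [adj_comm, spokeGraph_adj_inl_inr, Sym2.mem_iff, or_assoc]

variable [Finite V]

lemma vdeg_spokeGraph_inl_add (h : SpokeHyp G v w x) (a : V) :
    vdeg (SpokeGraph G v w x) (Sum.inl a) + {_u : Unit | a ∈ s(v, w)}.ncard =
      vdeg G a + {_u : Unit | a ∈ s(v, w) ∨ a = x}.ncard := by
  have hinl : {b | (SpokeGraph G v w x).Adj (Sum.inl a) (Sum.inl b)} =
      G.neighborSet a \ {z | ∃ _ : Unit, s(a, z) = s(v, w)} := by
    ext b; simp [spokeGraph_adj_inl_inl]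
  rw [vdeg_sum, hinl, ← ncard_neighborSet_sdiff_add (e := fun _ : Unit => s(v, w))
    (Function.injective_of_subsingleton _) (fun _ => h.2.2.2.1) a]
  simp only [spokeGraph_adj_inl_inr]
  ring

lemma vdeg_spokeGraph_inl_of_ne (h : SpokeHyp G v w x) {a : V} (hax : a ≠ x) :
    vdeg (SpokeGraph G v w x) (Sum.inl a) = vdeg G a := by
  simpa [hax] using vdeg_spokeGraph_inl_add h a

lemma vdeg_spokeGraph_inl_self (h : SpokeHyp G v w x) :
    vdeg (SpokeGraph G v w x) (Sum.inl x) = vdeg G x + 1 := by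
  simpa [h.2.1.symm, h.2.2.1.symm] using vdeg_spokeGraph_inl_add h x

lemma vdeg_spokeGraph_inr (h : SpokeHyp G v w x) (u : Unit) :
    vdeg (SpokeGraph G v w x) (Sum.inr u) = 3 := by
  obtain ⟨hvw, hvx, hwx, -⟩ := h
  have : {a | (SpokeGraph G v w x).Adj (Sum.inr u) (Sum.inl a)} = {v, w, x} := by
    ext; simp [spokeGraph_adj_inr_inl]
  rw [vdeg_sum, this, Set.ncard_eq_three.mpr ⟨v, w, x, hvw, hvx, hwx, rfl⟩]
  simp

lemma three_le_vdeg_spokeGraph (h : SpokeHyp G v w x) (hx : 3 ≤ vdeg G x) (q : V ⊕ Unit) :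
    3 ≤ vdeg (SpokeGraph G v w x) q := by
  rcases q with a | u
  · by_cases hax : a = x
    · rw [hax, vdeg_spokeGraph_inl_self h]; omega
    · rw [vdeg_spokeGraph_inl_of_ne h hax, h.2.2.2.2 a hax]
  · rw [vdeg_spokeGraph_inr h]

lemma setOf_three_lt_vdeg_spokeGraph (h : SpokeHyp G v w x) (hx : 3 ≤ vdeg G x) :
    {q | 3 < vdeg (SpokeGraph G v w x) q} = {Sum.inl x} := by
  ext (a | u)
  · by_cases hax : a = x
    · simp only [hax, vdeg_spokeGraph_inl_self h, Set.mem_ofPred_eq, Set.mem_singleton_iff,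
        iff_true]
      omega
    · simp [vdeg_spokeGraph_inl_of_ne h hax, hax, h.2.2.2.2 a hax]
  · simp [vdeg_spokeGraph_inr h]

end Spoke

section EdgeJoin

variable {V : Type*} {G : SimpleGraph V} {a b c d : V}

lemma edgeJoinGraph_adj_inl_inl {u u' : V} :
    (EdgeJoinGraph G a b c d).Adj (Sum.inl u) (Sum.inl u') ↔
      G.Adj u u' ∧ s(u, u') ≠ s(a, b) ∧ s(u, u') ≠ s(c, d) := by
  simp only [EdgeJoinGraph, fromRel_adj, ne_eq, Sum.inl.injEq, Sym2.eq_iff]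
  constructor
  · rintro ⟨-, h | h⟩
    · exact ⟨h.1, by tauto⟩
    · exact ⟨h.1.symm, by tauto⟩
  · rintro ⟨huu', h⟩
    exact ⟨huu'.ne, Or.inl ⟨huu', by tauto⟩⟩

lemma edgeJoinGraph_adj_inl_inr {u : V} {i : Bool} :
    (EdgeJoinGraph G a b c d).Adj (Sum.inl u) (Sum.inr i) ↔ u ∈ cond i s(c, d) s(a, b) := by
  cases i <;> simp [EdgeJoinGraph]

lemma edgeJoinGraph_adj_inr_inr {i i' : Bool} :
    (EdgeJoinGraph G a b c d).Adj (Sum.inr i) (Sum.inr i') ↔ i ≠ i' := by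
  cases i <;> cases i' <;> simp [EdgeJoinGraph]

variable [Finite V]

lemma vdeg_edgeJoinGraph_inl (hab : G.Adj a b) (hcd : G.Adj c d) (hne : s(a, b) ≠ s(c, d))
    (u : V) : vdeg (EdgeJoinGraph G a b c d) (Sum.inl u) = vdeg G u := by
  have he : Function.Injective fun i : Bool => cond i s(c, d) s(a, b) := by
    intro i i'; cases i <;> cases i' <;> simp [hne, hne.symm]
  have hinl : {u' | (EdgeJoinGraph G a b c d).Adj (Sum.inl u) (Sum.inl u')} =
      G.neighborSet u \ {z | ∃ i : Bool, s(u, z) = cond i s(c, d) s(a, b)} := by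
    ext u'; simp [edgeJoinGraph_adj_inl_inl]
  rw [vdeg_sum, hinl, ← ncard_neighborSet_sdiff_add he (by simp [hab, hcd]) u]
  simp only [edgeJoinGraph_adj_inl_inr]

lemma vdeg_edgeJoinGraph_inr (hab : G.Adj a b) (hcd : G.Adj c d) (i : Bool) :
    vdeg (EdgeJoinGraph G a b c d) (Sum.inr i) = 3 := by
  have hinr : {i' | (EdgeJoinGraph G a b c d).Adj (Sum.inr i) (Sum.inr i')} = {!i} := by
    ext i'; cases i <;> cases i' <;> simp [edgeJoinGraph_adj_inr_inr]
  rw [vdeg_sum, hinr, Set.ncard_singleton]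
  cases i
  · have : {u | (EdgeJoinGraph G a b c d).Adj (Sum.inr false) (Sum.inl u)} = {a, b} := by
      ext; simp [adj_comm _ (Sum.inr _), edgeJoinGraph_adj_inl_inr]
    rw [this, Set.ncard_pair hab.ne]
  · have : {u | (EdgeJoinGraph G a b c d).Adj (Sum.inr true) (Sum.inl u)} = {c, d} := by
      ext; simp [adj_comm _ (Sum.inr _), edgeJoinGraph_adj_inl_inr]
    rw [this, Set.ncard_pair hcd.ne]

end EdgeJoin

section Bridge

lemma BridgeHyp.ne_center {V : Type*} {G : SimpleGraph V} {v x y z : V}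
    (h : BridgeHyp G v x y z) {a : V} (ha : a = x ∨ a = y ∨ a = z) : a ≠ v := by
  have : a ∈ G.neighborSet v := by rw [h.2.2.2]; simpa using ha
  exact (G.ne_of_adj this).symm

lemma BridgeHyp.vdeg_eq {V : Type*} {G : SimpleGraph V} {v x y z : V}
    (h : BridgeHyp G v x y z) : vdeg G v = 3 := by
  rw [vdeg, h.2.2.2]
  exact Set.ncard_eq_three.mpr ⟨x, y, z, h.1, h.2.1, h.2.2.1, rfl⟩

/-- A vertex gets a partner across the bridge exactly when it was a neighbour of `v`. -/
lemma BridgeHyp.ncard_matched {V W : Type*} {G : SimpleGraph V} {v x y z : V}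
    (h : BridgeHyp G v x y z) (x' y' z' : W) (a : V) :
    {b | (a = x ∧ b = x') ∨ (a = y ∧ b = y') ∨ (a = z ∧ b = z')}.ncard =
      (G.neighborSet a ∩ {v}).ncard := by
  obtain ⟨hxy, hxz, hyz, hN⟩ := h
  have hva : v ∈ G.neighborSet a ↔ a = x ∨ a = y ∨ a = z := by
    rw [mem_neighborSet, adj_comm, ← mem_neighborSet, hN]; simp
  by_cases ha : a = x ∨ a = y ∨ a = z
  · rw [Set.inter_singleton_of_mem (hva.mpr ha), Set.ncard_singleton]
    rcases ha with rfl | rfl | rfl <;> simp [hxy, hxz, hyz, hxy.symm, hxz.symm, hyz.symm]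
  · have : {b | (a = x ∧ b = x') ∨ (a = y ∧ b = y') ∨ (a = z ∧ b = z')} = ∅ := by
      ext b; simp only [Set.mem_ofPred_eq, Set.mem_empty_iff_false, iff_false]; tauto
    rw [Set.inter_singleton_eq_empty.mpr (mt hva.mp ha), this, Set.ncard_empty, Set.ncard_empty]

variable {V1 V2 : Type*} {G1 : SimpleGraph V1} {G2 : SimpleGraph V2}
  {v1 x1 y1 z1 : V1} {v2 x2 y2 z2 : V2}

local notation "𝔅" => BridgeGraph G1 G2 v1 x1 y1 z1 v2 x2 y2 z2

lemma bridgeGraph_adj_inl_inl {a a' : {a // a ≠ v1}} :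
    (𝔅).Adj (Sum.inl a) (Sum.inl a') ↔ G1.Adj a a' := by
  simp only [BridgeGraph, fromRel_adj, ne_eq, Sum.inl.injEq]
  exact ⟨fun ⟨_, h⟩ => h.elim id (·.symm),
    fun h => ⟨fun e => h.ne (congrArg _ e), Or.inl h⟩⟩

lemma bridgeGraph_adj_inr_inr {b b' : {b // b ≠ v2}} :
    (𝔅).Adj (Sum.inr b) (Sum.inr b') ↔ G2.Adj b b' := by
  simp only [BridgeGraph, fromRel_adj, ne_eq, Sum.inr.injEq]
  exact ⟨fun ⟨_, h⟩ => h.elim id (·.symm),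
    fun h => ⟨fun e => h.ne (congrArg _ e), Or.inl h⟩⟩

lemma bridgeGraph_adj_inl_inr {a : {a // a ≠ v1}} {b : {b // b ≠ v2}} :
    (𝔅).Adj (Sum.inl a) (Sum.inr b) ↔
      (a.1 = x1 ∧ b.1 = x2) ∨ (a.1 = y1 ∧ b.1 = y2) ∨ (a.1 = z1 ∧ b.1 = z2) := by
  simp [BridgeGraph]

variable [Finite V1] [Finite V2]

lemma vdeg_bridgeGraph_inl (h1 : BridgeHyp G1 v1 x1 y1 z1) (h2 : BridgeHyp G2 v2 x2 y2 z2)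
    (a : {a // a ≠ v1}) : vdeg (𝔅) (Sum.inl a) = vdeg G1 a := by
  have hinl : {a' | (𝔅).Adj (Sum.inl a) (Sum.inl a')}.ncard =
      (G1.neighborSet a \ {v1}).ncard := by
    simp only [bridgeGraph_adj_inl_inl]
    rw [ncard_setOf_subtype (· ≠ v1) (G1.Adj a)]
    congr 1
    ext; simp [and_comm]
  have hinr : {b | (𝔅).Adj (Sum.inl a) (Sum.inr b)}.ncard =
      (G1.neighborSet a ∩ {v1}).ncard := by
    simp only [bridgeGraph_adj_inl_inr]
    rw [← h1.ncard_matched x2 y2 z2, ncard_setOf_subtype (· ≠ v2)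
      (fun b => (a.1 = x1 ∧ b = x2) ∨ (a.1 = y1 ∧ b = y2) ∨ (a.1 = z1 ∧ b = z2))]
    congr 1
    ext b
    refine and_iff_right_of_imp fun hb => h2.ne_center ?_
    rcases hb with hb | hb | hb <;> simp [hb.2]
  rw [vdeg_sum, hinl, hinr, add_comm, Set.ncard_inter_add_ncard_sdiff_eq_ncard]
  rfl

lemma vdeg_bridgeGraph_inr (h1 : BridgeHyp G1 v1 x1 y1 z1) (h2 : BridgeHyp G2 v2 x2 y2 z2)
    (b : {b // b ≠ v2}) : vdeg (𝔅) (Sum.inr b) = vdeg G2 b := by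
  have hinl : {a | (𝔅).Adj (Sum.inr b) (Sum.inl a)}.ncard =
      (G2.neighborSet b ∩ {v2}).ncard := by
    simp only [adj_comm (𝔅) (Sum.inr _), bridgeGraph_adj_inl_inr]
    rw [← h2.ncard_matched x1 y1 z1, ncard_setOf_subtype (· ≠ v1)
      (fun a => (a = x1 ∧ b.1 = x2) ∨ (a = y1 ∧ b.1 = y2) ∨ (a = z1 ∧ b.1 = z2))]
    congr 1
    ext a
    simp only [Set.mem_ofPred_eq]
    exact ⟨fun ⟨_, ha⟩ => by tauto, fun ha => ⟨h1.ne_center (by tauto), by tauto⟩⟩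
  have hinr : {b' | (𝔅).Adj (Sum.inr b) (Sum.inr b')}.ncard =
      (G2.neighborSet b \ {v2}).ncard := by
    simp only [bridgeGraph_adj_inr_inr]
    rw [ncard_setOf_subtype (· ≠ v2) (G2.Adj b)]
    congr 1
    ext; simp [and_comm]
  rw [vdeg_sum, hinl, hinr, Set.ncard_inter_add_ncard_sdiff_eq_ncard]
  rfl

lemma three_le_vdeg_bridgeGraph (h1 : BridgeHyp G1 v1 x1 y1 z1) (h2 : BridgeHyp G2 v2 x2 y2 z2)
    (hG1 : ∀ a, 3 ≤ vdeg G1 a) (hG2 : ∀ b, 3 ≤ vdeg G2 b)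
    (q : {a // a ≠ v1} ⊕ {b // b ≠ v2}) :
    3 ≤ vdeg (𝔅) q := by
  rcases q with a | b
  · exact vdeg_bridgeGraph_inl h1 h2 a ▸ hG1 a
  · exact vdeg_bridgeGraph_inr h1 h2 b ▸ hG2 b

lemma ncard_three_lt_vdeg_bridgeGraph (h1 : BridgeHyp G1 v1 x1 y1 z1)
    (h2 : BridgeHyp G2 v2 x2 y2 z2) :
    {q | 3 < vdeg (𝔅) q}.ncard = {a | 3 < vdeg G1 a}.ncard + {b | 3 < vdeg G2 b}.ncard := by
  rw [ncard_setOf_sum]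
  simp only [vdeg_bridgeGraph_inl h1 h2, vdeg_bridgeGraph_inr h1 h2]
  rw [ncard_setOf_subtype (· ≠ v1) (3 < vdeg G1 ·),
    ncard_setOf_subtype (· ≠ v2) (3 < vdeg G2 ·)]
  congr 2 <;> ext <;>
    exact and_iff_right_of_imp fun h hv => by simp [hv, h1.vdeg_eq, h2.vdeg_eq] at h

end Bridge

structure ConstructionInvariant (G : FinGraph) (j t p s : ℕ) : Prop where
  card_eq : Fintype.card G.V = 2 * j + 2 * t + p + s + 4
  three_le_vdeg : ∀ v, 3 ≤ vdeg G.graph v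
  ncard_three_lt_vdeg : {v | 3 < vdeg G.graph v}.ncard = p
  le_succ : p ≤ j + 1

lemma ConstructionInvariant.of_iso {G : FinGraph} {W : Type*} [Fintype W] {H : SimpleGraph W}
    (e : G.graph ≃g H) {j t p s : ℕ} (hcard : Fintype.card W = 2 * j + 2 * t + p + s + 4)
    (h3 : ∀ w, 3 ≤ vdeg H w) (hp : {w | 3 < vdeg H w}.ncard = p) (hpj : p ≤ j + 1) :
    ConstructionInvariant G j t p s :=
  ⟨(Fintype.card_congr e.toEquiv).trans hcard, fun v => vdeg_iso e v ▸ h3 (e v),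
    (ncard_setOf_vdeg_iso e (3 < ·)).symm.trans hp, hpj⟩

lemma ncard_three_lt_vdeg_of_forall_eq {V : Type*} {G : SimpleGraph V}
    (h : ∀ v, vdeg G v = 3) : {v | 3 < vdeg G v}.ncard = 0 := by
  simp [h]

theorem Constructed.invariant {G : FinGraph} {j t p s : ℕ} (hc : Constructed G j t p s) :
    ConstructionInvariant G j t p s := by
  classical
  induction hc with
  | base G he =>
    obtain ⟨e⟩ := he
    exact .of_iso e (by simp) (fun v => (vdeg_top_fin_four v).ge)
      (ncard_three_lt_vdeg_of_forall_eq vdeg_top_fin_four) (by omega)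
  | bridge G G1 G2 j1 t1 p1 s1 j2 t2 p2 s2 _ _ hB ih1 ih2 =>
    obtain ⟨v1, x1, y1, z1, v2, x2, y2, z2, h1, h2, ⟨e⟩⟩ := hB
    refine .of_iso e ?_ (three_le_vdeg_bridgeGraph h1 h2 ih1.three_le_vdeg ih2.three_le_vdeg)
      (by rw [ncard_three_lt_vdeg_bridgeGraph h1 h2, ih1.ncard_three_lt_vdeg,
        ih2.ncard_three_lt_vdeg]) (by linarith [ih1.le_succ, ih2.le_succ])
    simp only [Fintype.card_sum, Fintype.card_subtype_compl, Fintype.card_unique]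
    have := ih1.card_eq; have := ih2.card_eq
    omega
  | edgeJoin G G' j t p s _ hJ ih =>
    obtain ⟨hreg, -, a, b, c, d, hab, hcd, hne, ⟨e⟩⟩ := hJ
    have hdeg : ∀ q, vdeg (EdgeJoinGraph G'.graph a b c d) q = 3 := by
      rintro (u | i)
      · exact (vdeg_edgeJoinGraph_inl hab hcd hne u).trans (hreg u)
      · exact vdeg_edgeJoinGraph_inr hab hcd i
    have hp : p = 0 := ih.ncard_three_lt_vdeg.symm.trans (ncard_three_lt_vdeg_of_forall_eq hreg)
    refine .of_iso e ?_ (fun q => (hdeg q).ge)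
      ((ncard_three_lt_vdeg_of_forall_eq hdeg).trans hp.symm) ih.le_succ
    simp only [Fintype.card_sum, Fintype.card_bool, ih.card_eq]
    ring
  | primarySpoke G G' j t p s _ hS ih =>
    obtain ⟨v, w, x, hS, hx, ⟨e⟩⟩ := hS
    have hp : p = 0 := ih.ncard_three_lt_vdeg.symm.trans (ncard_three_lt_vdeg_of_forall_eq
      fun z => if hz : z = x then hz ▸ hx else hS.2.2.2.2 z hz)
    refine .of_iso e ?_ (three_le_vdeg_spokeGraph hS hx.ge)
      (by rw [setOf_three_lt_vdeg_spokeGraph hS hx.ge, Set.ncard_singleton, hp]) (by omega)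
    simp only [Fintype.card_sum, Fintype.card_unit, ih.card_eq]
    ring
  | secondarySpoke G G' j t p s _ hS ih =>
    obtain ⟨v, w, x, hS, hx, ⟨e⟩⟩ := hS
    have hp : p = 1 := by
      rw [← ih.ncard_three_lt_vdeg, ← Set.ncard_singleton x]
      congr 1
      ext z
      exact ⟨fun hz => by_contra fun hzx => by simp [hS.2.2.2.2 z hzx] at hz,
        fun hz => hz ▸ hx⟩
    refine .of_iso e ?_ (three_le_vdeg_spokeGraph hS hx.le)
      (by rw [setOf_three_lt_vdeg_spokeGraph hS hx.le, Set.ncard_singleton, hp]) ih.le_succ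
    simp only [Fintype.card_sum, Fintype.card_unit, ih.card_eq]
    ring

lemma ceil_two_mul_add_two_div_three {k l : ℤ} (hl : -1 ≤ l) (hl' : l ≤ 1) :
    ⌈(2 * ((3 * k + l : ℤ) : ℚ) + 2) / 3⌉ = 2 * k + l + 1 := by
  have hl₁ : (-1 : ℚ) ≤ l := by exact_mod_cast hl
  have hl₂ : (l : ℚ) ≤ 1 := by exact_mod_cast hl'
  rw [Int.ceil_eq_iff]
  push_cast
  constructor <;> linarith

theorem numbers_of_extremal_general (G : FinGraph) (k : ℕ) (l : ℤ)
    (hl : l = -1 ∨ l = 0 ∨ l = 1) (hn : (Fintype.card G.V : ℤ) = 3 * k + l)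
    (hE : ExtremalU3 G.graph)
    (j t p s : ℕ) (hc : Constructed G j t p s) :
    (p : ℤ) = k - 1 ∧
    (l = -1 → (j : ℤ) = k - 2 ∧ t = 0 ∧ s = 0) ∧
    (l = 0 → (j : ℤ) = k - 2 ∧ t = 0 ∧ s = 1) ∧
    (l = 1 → ((j : ℤ) = k - 1 ∧ t = 0 ∧ s = 0) ∨
             ((j : ℤ) = k - 2 ∧ t = 1 ∧ s = 0) ∨
             ((j : ℤ) = k - 2 ∧ t = 0 ∧ s = 2)) := by
  obtain ⟨hcard, hdeg, hhigh, hpj⟩ := hc.invariant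
  have hnu := nu_add_ncard_lt_vdeg hdeg (exists_vdeg_eq_of_ncard_lt hdeg (by omega))
  have hcardQ : (Fintype.card G.V : ℚ) = ((3 * k + l : ℤ) : ℚ) := by exact_mod_cast hn
  have hnuk : (nu G.graph : ℤ) = 2 * k + l + 1 := by
    rw [hE.2, hcardQ, ceil_two_mul_add_two_div_three] <;> omega
  rcases hl with rfl | rfl | rfl <;> omega

/-- **Theorem 19.** Given an extremal uniformly 3-connected graph on `n = 3k + ℓ ≥ 5`
vertices, `k ≥ 2`, `ℓ ∈ {−1, 0, 1}`, constructed with `j` bridge operations, `t` edge joins,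
`p` primary and `s` secondary spoke operations: (1) `p = k − 1`; (2) if `ℓ = −1` then
`j = k − 2`, `t = s = 0`; (3) if `ℓ = 0` then `j = k − 2`, `t = 0`, `s = 1`; (4) if `ℓ = 1`
then `j = k − 1`, `t = s = 0`, or `j = k − 2`, `t = 1`, `s = 0`, or `j = k − 2`, `t = 0`,
`s = 2`. -/
theorem numbers_of_extremal (G : FinGraph) (k : ℕ) (hk : 2 ≤ k) (l : ℤ)
    (hl : l = -1 ∨ l = 0 ∨ l = 1) (hn : (Fintype.card G.V : ℤ) = 3 * k + l)
    (h5 : 5 ≤ Fintype.card G.V) (hE : ExtremalU3 G.graph)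
    (j t p s : ℕ) (hc : Constructed G j t p s) :
    (p : ℤ) = k - 1 ∧
    (l = -1 → (j : ℤ) = k - 2 ∧ t = 0 ∧ s = 0) ∧
    (l = 0 → (j : ℤ) = k - 2 ∧ t = 0 ∧ s = 1) ∧
    (l = 1 → ((j : ℤ) = k - 1 ∧ t = 0 ∧ s = 0) ∨
             ((j : ℤ) = k - 2 ∧ t = 1 ∧ s = 0) ∨
             ((j : ℤ) = k - 2 ∧ t = 0 ∧ s = 2)) :=
  numbers_of_extremal_general G k l hl hn hE j t p s hc
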